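/- arXiv:1408.2149 — 5 statements merged into one kernel-verified Lean document; each statement's English description precedes it below -/
import Mathlib

section
/- Let k_B, k_D, k_E, k_N, ε, α > 0 with k_D < k_B, and let B̄ > 0, L̄ = k_D/k_B. Define a₃ = 1, a₂ = B̄·(k_B + k_E) + k_N + ε, a₁ = B̄·(k_B·k_N + k_E·k_N + k_D·k_E + k_B·k_D·α + k_B·ε) + k_N·ε, a₀ = B̄·(k_D·k_E·k_N + k_B·k_N·ε + k_B·k_D·α·ε). Then a₀ > 0, a₁ > 0, a₂ > 0 and a₁·a₂ − a₀·a₃ > 0. -/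
theorem stmt_4 (kB kD kE kN ε α : ℝ)
    (hkB : 0 < kB) (hkD : 0 < kD) (hkE : 0 < kE) (hkN : 0 < kN)
    (hε : 0 < ε) (hα : 0 < α) (hlt : kD < kB)
    (Bbar Lbar : ℝ) (hBpos : 0 < Bbar) (hL : Lbar = kD / kB)
    (a0 a1 a2 a3 : ℝ)
    (h3 : a3 = 1)
    (h2 : a2 = Bbar * (kB + kE) + kN + ε)
    (h1 : a1 = Bbar * (kB * kN + kE * kN + kD * kE + kB * kD * α + kB * ε) + kN * ε)
    (h0 : a0 = Bbar * (kD * kE * kN + kB * kN * ε + kB * kD * α * ε)) :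
    0 < a0 ∧ 0 < a1 ∧ 0 < a2 ∧ 0 < a1 * a2 - a0 * a3 := by
  refine ⟨by rw [h0]; positivity, by rw [h1]; positivity, by rw [h2]; positivity, ?_⟩
  have key : a1 * a2 - a0 * a3 = Bbar*Bbar*kB*kB*kD*α + Bbar*Bbar*kB*kB*kN + Bbar*Bbar*kB*kB*ε + Bbar*Bbar*kB*kD*kE + Bbar*Bbar*kB*kD*kE*α + 2*(Bbar*Bbar*kB*kE*kN) + Bbar*Bbar*kB*kE*ε + Bbar*Bbar*kD*kE*kE + Bbar*Bbar*kE*kE*kN + Bbar*kB*kD*kN*α + Bbar*kB*kN*kN + 2*(Bbar*kB*kN*ε) + Bbar*kB*ε*ε + Bbar*kD*kE*ε + Bbar*kE*kN*kN + 2*(Bbar*kE*kN*ε) + kN*kN*ε + kN*ε*ε := by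
    subst h3 h2 h1 h0; ring
  rw [key]; positivity
end

section
/- Let k_B, k_D, k_E, k_N, ε, α > 0 with k_D < k_B, and let B̄ = (1 − k_D/k_B)/(1 + α·k_D/k_N + k_E·k_D/(ε·k_B)), Ē = (k_E·k_D/(ε·k_B))·B̄, L̄ = k_D/k_B. Then every eigenvalue of the 3×3 matrix J with rows (−k_B·B̄, −k_B·B̄, −k_B·B̄), (k_E·(L̄−B̄), −k_E·B̄−ε, −k_E·B̄), (α·k_D, 0, −k_N) has negative real part. -/
lemma cubic_re_neg (a b c : ℝ) (ha : 0 < a) (hc : 0 < c) (hab : c < a * b)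
    (z : ℂ) (hz : z^3 + a * z^2 + b * z + c = 0) : z.re < 0 := by
  have hb : 0 < b := by nlinarith
  set x := z.re with hx
  set y := z.im with hy
  have hre : x^3 - 3*x*y^2 + a*(x^2 - y^2) + b*x + c = 0 := by
    have := congrArg Complex.re hz
    simp [Complex.add_re, Complex.mul_re, Complex.mul_im, pow_succ, Complex.ofReal_re,
      Complex.ofReal_im] at this
    linarith [this]
  have him : y * (3*x^2 - y^2 + 2*a*x + b) = 0 := by
    have := congrArg Complex.im hz
    simp [Complex.add_im, Complex.mul_re, Complex.mul_im, pow_succ, Complex.ofReal_re,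
      Complex.ofReal_im] at this
    nlinarith [this]
  by_cases hy0 : y = 0
  · rw [hy0] at hre
    by_contra h
    push_neg at h
    nlinarith [pow_nonneg h 3, mul_nonneg (sq_nonneg x) ha.le, mul_nonneg h hb.le]
  · have hyy : y^2 = 3*x^2 + 2*a*x + b := by
      rcases mul_eq_zero.1 him with h | h
      · exact absurd h hy0
      · linarith
    by_contra h
    push_neg at h
    nlinarith [sq_nonneg (2*x+a), hre, hyy, mul_nonneg h (sq_nonneg (2*x+a))]

theorem stmt_5 (kB kD kE kN ε α : ℝ)
    (hkB : 0 < kB) (hkD : 0 < kD) (hkE : 0 < kE) (hkN : 0 < kN)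
    (hε : 0 < ε) (hα : 0 < α) (hlt : kD < kB)
    (Bbar Ebar Lbar : ℝ)
    (hB : Bbar = (1 - kD / kB) / (1 + α * kD / kN + kE * kD / (ε * kB)))
    (hE : Ebar = (kE * kD / (ε * kB)) * Bbar)
    (hL : Lbar = kD / kB)
    (J : Matrix (Fin 3) (Fin 3) ℝ)
    (hJ : J = !![-(kB * Bbar), -(kB * Bbar), -(kB * Bbar);
                 kE * (Lbar - Bbar), -(kE * Bbar) - ε, -(kE * Bbar);
                 α * kD, 0, -kN]) :
    ∀ μ ∈ (J.map (Complex.ofReal)).charpoly.roots, μ.re < 0 := by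
  intro μ hμ
  have hroot : Polynomial.IsRoot ((J.map (Complex.ofReal)).charpoly) μ :=
    (Polynomial.mem_roots'.1 hμ).2
  have h0 : Polynomial.eval μ ((J.map Complex.ofReal).charpoly) = 0 := hroot
  rw [Matrix.charpoly, ← Polynomial.coe_evalRingHom, RingHom.map_det] at h0
  simp [Matrix.det_fin_three, Matrix.charmatrix_apply, Matrix.diagonal, hJ,
    Matrix.map_apply] at h0
  -- positivity facts
  have hBpos : 0 < Bbar := by
    rw [hB]
    apply div_pos
    · have : kD / kB < 1 := (div_lt_one hkB).2 hlt
      linarith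
    · have h1 : 0 < α * kD / kN := by positivity
      have h2 : 0 < kE * kD / (ε * kB) := by positivity
      linarith
  have hLpos : 0 < Lbar := by rw [hL]; positivity
  have hβ : 0 < kB * Bbar := mul_pos hkB hBpos
  have he : 0 < kE * Bbar := mul_pos hkE hBpos
  have heg : kE * Bbar + kE * (Lbar - Bbar) = kE * Lbar := by ring
  have hel : 0 < kE * Lbar := mul_pos hkE hLpos
  have hd : 0 < α * kD := mul_pos hα hkD
  set A := kB*Bbar + kE*Bbar + ε + kN with hA
  set Bc := kB*Bbar*(kE*Bbar + ε + kN + kE*(Lbar - Bbar) + α*kD) + kN*(kE*Bbar + ε) with hBc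
  set Cc := kB*Bbar*(kN*(kE*Bbar + ε + kE*(Lbar - Bbar)) + α*kD*ε) with hCc
  have hApos : 0 < A := by rw [hA]; nlinarith
  have hCpos : 0 < Cc := by
    rw [hCc]
    have : kN*(kE*Bbar + ε + kE*(Lbar - Bbar)) + α*kD*ε = kN*(kE*Lbar + ε) + α*kD*ε := by ring
    rw [this]
    exact mul_pos hβ (add_pos (mul_pos hkN (by linarith)) (mul_pos hd hε))
  have hABC : Cc < A * Bc := by
    have key : A * Bc - Cc =
        (kB*Bbar)^2*(kE*Lbar + ε + kN + α*kD)
      + (kB*Bbar)*(kE*Bbar + ε)*(ε + kN)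
      + (kB*Bbar)*(kE*Bbar + ε)*(kE*Lbar)
      + (kB*Bbar)*(kE*Bbar)*(α*kD)
      + kN*(kE*Bbar + ε)^2
      + kN*(kB*Bbar)*(kE*Bbar + ε + kN + α*kD)
      + kN^2*(kE*Bbar + ε) := by rw [hA, hBc, hCc]; ring
    have he' : (0:ℝ) < kE*Bbar + ε := by linarith
    have t1 := mul_pos (mul_pos hβ hβ) (show (0:ℝ) < kE*Lbar + ε + kN + α*kD by linarith)
    have t2 := mul_pos (mul_pos hβ he') (show (0:ℝ) < ε + kN by linarith)
    have t3 := mul_pos (mul_pos hβ he') hel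
    have t4 := mul_pos (mul_pos hβ he) hd
    have t5 := mul_pos hkN (mul_pos he' he')
    have t6 := mul_pos (mul_pos hkN hβ) (show (0:ℝ) < kE*Bbar + ε + kN + α*kD by linarith)
    have t7 := mul_pos (mul_pos hkN hkN) he'
    linarith [key, t1, t2, t3, t4, t5, t6, t7]
  apply cubic_re_neg A Bc Cc hApos hCpos hABC μ
  rw [hA, hBc, hCc]
  push_cast
  linear_combination h0
end

section
/- Let k_B, k_D, k_E, k_N, ε, α, M, γ > 0 with k_D < k_B, N ≥ 0. Let B̄ = (1 − k_D/k_B)/(1 + α·k_D/k_N + k_E·k_D/(ε·k_B)), L̄ = k_D/k_B, η̄ = γ·L̄/(1−L̄), m = M/(L̄·(1−L̄)). Define a₄ = 1, a₃ = m + B̄·(k_B + k_E) + k_N + ε, a₂ = m·B̄·(k_B + k_E) + m·(k_N + ε) + N²·η̄·B̄·(1 + k_E·k_D/(k_B·ε) + α·k_D/k_N) + B̄·(k_B·k_N + k_E·k_N + k_E·k_D + k_B·k_D·α + k_B·ε) + k_N·ε, a₁ = m·B̄·(k_B·k_N + k_E·k_N + k_E·k_D + k_B·k_D·α + k_B·ε)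 + m·k_N·ε + N²·η̄·B̄·(k_N + ε)·(1 + α·k_D/k_N + k_E·k_D/(ε·k_B)) + B̄·(k_E·k_N·k_D + k_B·k_N·ε + k_B·k_D·α·ε). Then a₂·a₃ − a₁·a₄ > 0. -/
theorem stmt_8 (kB kD kE kN ε α M γ N : ℝ)
    (hkB : 0 < kB) (hkD : 0 < kD) (hkE : 0 < kE) (hkN : 0 < kN)
    (hε : 0 < ε) (hα : 0 < α) (hM : 0 < M) (hγ : 0 < γ)
    (hlt : kD < kB) (hN : 0 ≤ N)
    (Bbar Lbar ηbar m : ℝ)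
    (hB : Bbar = (1 - kD / kB) / (1 + α * kD / kN + kE * kD / (ε * kB)))
    (hL : Lbar = kD / kB)
    (hη : ηbar = γ * Lbar / (1 - Lbar))
    (hm : m = M / (Lbar * (1 - Lbar)))
    (a1 a2 a3 a4 : ℝ)
    (h4 : a4 = 1)
    (h3 : a3 = m + Bbar * (kB + kE) + kN + ε)
    (h2 : a2 = m * Bbar * (kB + kE) + m * (kN + ε)
        + N ^ 2 * ηbar * Bbar * (1 + kE * kD / (kB * ε) + α * kD / kN)
        + Bbar * (kB * kN + kE * kN + kE * kD + kB * kD * α + kB * ε) + kN * ε)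
    (h1 : a1 = m * Bbar * (kB * kN + kE * kN + kE * kD + kB * kD * α + kB * ε)
        + m * (kN * ε)
        + N ^ 2 * ηbar * Bbar * (kN + ε) * (1 + α * kD / kN + kE * kD / (ε * kB))
        + Bbar * (kE * kN * kD + kB * kN * ε + kB * kD * α * ε)) :
    0 < a2 * a3 - a1 * a4 := by
  have hLpos : 0 < Lbar := by rw [hL]; positivity
  have hL1 : Lbar < 1 := by rw [hL]; exact (div_lt_one hkB).mpr hlt
  have hmpos : 0 < m := by
    rw [hm]; exact div_pos hM (mul_pos hLpos (by linarith))
  have hηpos : 0 < ηbar := by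
    rw [hη]; exact div_pos (mul_pos hγ hLpos) (by linarith)
  have hSpos : 0 < 1 + α * kD / kN + kE * kD / (ε * kB) := by positivity
  have hBpos : 0 < Bbar := by
    rw [hB]
    apply div_pos _ hSpos
    have : kD / kB < 1 := (div_lt_one hkB).mpr hlt
    linarith
  subst h1 h2 h3 h4
  have key : (m * Bbar * (kB + kE) + m * (kN + ε)
        + N ^ 2 * ηbar * Bbar * (1 + kE * kD / (kB * ε) + α * kD / kN)
        + Bbar * (kB * kN + kE * kN + kE * kD + kB * kD * α + kB * ε) + kN * ε)
      * (m + Bbar * (kB + kE) + kN + ε)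
      - (m * Bbar * (kB * kN + kE * kN + kE * kD + kB * kD * α + kB * ε)
        + m * (kN * ε)
        + N ^ 2 * ηbar * Bbar * (kN + ε) * (1 + α * kD / kN + kE * kD / (ε * kB))
        + Bbar * (kE * kN * kD + kB * kN * ε + kB * kD * α * ε)) * 1
      = m ^ 2 * (Bbar * (kB + kE)) + m ^ 2 * (kN + ε)
        + m * (N ^ 2 * ηbar * Bbar * (1 + kE * kD / (kB * ε) + α * kD / kN))
        + m * (Bbar * (kB + kE)) ^ 2
        + 2 * m * (Bbar * (kB + kE)) * (kN + ε)
        + m * (kN + ε) ^ 2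
        + (Bbar * (kB + kE)) * (N ^ 2 * ηbar * Bbar * (1 + kE * kD / (kB * ε) + α * kD / kN))
        + (Bbar * (kB + kE)) * (Bbar * (kB * kN + kE * kN + kE * kD + kB * kD * α + kB * ε))
        + (Bbar * (kB + kE)) * (kN * ε)
        + (kN * ε) * (kN + ε)
        + Bbar * (kB * kN ^ 2 + kE * kN ^ 2 + kB * kD * α * kN + kB * ε * kN
            + kE * kN * ε + kE * kD * ε + kB * ε ^ 2) := by
    field_simp
    ring
  rw [key]
  positivity
end

section
/- Let k_B, k_D, k_E, k_N, ε, α, M, γ > 0 with k_D < k_B, N ≥ 0. With L̄ = k_D/k_B, B̄ = (1−L̄)/(1 + α·k_D/k_N + k_E·k_D/(ε·k_B)), η̄ = γ·L̄/(1−L̄), m = M/(L̄(1−L̄)), the coefficients a₀ = m·B̄·(k_E·k_N·k_D + k_N·k_B·ε + k_D·k_B·α·ε) + N²·η̄·B̄·(k_E·k_N·k_D/k_B + k_N·ε + k_D·α·ε), together with a₁, a₂, a₃, a₄ as in the quartic characteristic polynomial of the linearized 1D hyperbolic system, satisfy all the Routh–Hurwitz conditions: aᵢ > 0 for all i, a₃a₂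 > a₄a₁, and a₃a₂a₁ > a₄a₁² + a₃²a₀. -/
/-!
With `Q = N²η̄B̄(1 + αk_D/k_N + k_Ek_D/(εk_B))` the characteristic polynomial factors as
`p(λ) = (λ + m) c(λ) + Q (λ + k_N)(λ + ε)`, where `c(λ) = λ(λ + k_N)(λ + ε) + B̄ b(λ)` and
`b(λ) = k_B(λ + k_N)(λ + ε) + k_E(λ + k_N)(λ + k_D) + k_Bk_Dα(λ + ε)`.
Writing `c(λ) = λ³ + c₂λ² + c₁λ + c₀`, the Hurwitz determinants of such a quartic split as
`Δ₂ = m c₂(m + c₂) + mQ + H + Q(c₂ - k_N - ε)` and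
`Δ₃ = H c(m) + Q L + Q² (k_N + ε)(c₂ - k_N - ε + m)` for an explicit polynomial `L`, where
`H = c₂c₁ - c₀` is the Hurwitz margin of `c`. Both `H` and `L` are sums of nonnegative terms as
soon as `b₀ + k_N ε b₂ ≤ (k_N + ε) b₁`, which holds for this `b`.
-/

def IsRouthHurwitzQuartic (a4 a3 a2 a1 a0 : ℝ) : Prop :=
  0 < a0 ∧ 0 < a1 ∧ 0 < a2 ∧ 0 < a3 ∧ 0 < a4 ∧
    a3 * a2 > a4 * a1 ∧ a3 * a2 * a1 > a4 * a1 ^ 2 + a3 ^ 2 * a0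

theorem isRouthHurwitzQuartic_of_linear_mul_cubic_add_quadratic
    {m Q B u v b2 b1 b0 a3 a2 a1 a0 : ℝ} (hm : 0 < m) (hQ : 0 ≤ Q) (hB : 0 < B)
    (hu : 0 < u) (hv : 0 < v) (hb2 : 0 < b2) (hb0 : 0 < b0)
    (hb : b0 + u * v * b2 ≤ (u + v) * b1)
    (h3 : a3 = m + (u + v + B * b2))
    (h2 : a2 = m * (u + v + B * b2) + (u * v + B * b1) + Q)
    (h1 : a1 = m * (u * v + B * b1) + B * b0 + Q * (u + v))
    (h0 : a0 = m * (B * b0) + Q * (u * v)) :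
    IsRouthHurwitzQuartic 1 a3 a2 a1 a0 := by
  obtain ⟨D, hD, hb1⟩ : ∃ D, 0 ≤ D ∧ (u + v) * b1 = b0 + u * v * b2 + D :=
    ⟨_, sub_nonneg.2 hb, by ring⟩
  have hb1_pos : 0 < b1 := pos_of_mul_pos_right (by rw [hb1]; positivity) (by positivity)
  have hΔ₂ : a3 * a2 - a1 = m * (u + v + B * b2) * (m + (u + v + B * b2)) + m * Q
      + ((u + v) * (u * v) + B * (2 * u * v * b2 + D) + B ^ 2 * b1 * b2) + Q * B * b2 := by
    rw [h3, h2, h1]; linear_combination B * hb1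
  have hΔ₃ : a1 * (a3 * a2 - a1) - a3 ^ 2 * a0
      = ((u + v) * (u * v) + B * (2 * u * v * b2 + D) + B ^ 2 * b1 * b2)
          * (m ^ 3 + m ^ 2 * (u + v + B * b2) + m * (u * v + B * b1) + B * b0)
        + Q * (B * (u + v) * D + B ^ 2 * b2 * (D + 2 * b0)
          + m * ((u + v) * (u ^ 2 + v ^ 2) + B * (b0 + b2 * (2 * u ^ 2 + 3 * u * v + 2 * v ^ 2))
            + B ^ 2 * b2 * (b1 + (u + v) * b2))
          + m ^ 2 * ((u + v) ^ 2 + B * b1 + B * (u + v) * b2))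
        + Q ^ 2 * (u + v) * (B * b2 + m) := by
    rw [h3, h2, h1, h0]
    linear_combination (B * (m ^ 3 + m ^ 2 * (u + v + B * b2) + m * (u * v + B * b1) + B * b0)
      + Q * (B * (u + v) + B ^ 2 * b2)) * hb1
  have ha1 : 0 < a1 := by rw [h1]; positivity
  refine ⟨by rw [h0]; positivity, ha1, by rw [h2]; positivity, by rw [h3]; positivity, one_pos,
    ?_, ?_⟩
  · have : 0 < a3 * a2 - a1 := by rw [hΔ₂]; positivity
    linarith
  · have : 0 < a1 * (a3 * a2 - a1) - a3 ^ 2 * a0 := by rw [hΔ₃]; positivity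
    linarith

theorem stmt_9_general (kB kD kE kN ε α M γ N : ℝ)
    (hkB : 0 < kB) (hkD : 0 < kD) (hkE : 0 < kE) (hkN : 0 < kN)
    (hε : 0 < ε) (hα : 0 < α) (hM : 0 < M) (hγ : 0 < γ)
    (hlt : kD < kB)
    (Bbar Lbar ηbar m : ℝ)
    (hL : Lbar = kD / kB)
    (hB : Bbar = (1 - Lbar) / (1 + α * kD / kN + kE * kD / (ε * kB)))
    (hη : ηbar = γ * Lbar / (1 - Lbar))
    (hm : m = M / (Lbar * (1 - Lbar)))
    (a0 a1 a2 a3 a4 : ℝ)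
    (h4 : a4 = 1)
    (h3 : a3 = m + Bbar * (kB + kE) + kN + ε)
    (h2 : a2 = m * Bbar * (kB + kE) + m * (kN + ε)
        + N ^ 2 * ηbar * Bbar * (1 + kE * kD / (kB * ε) + α * kD / kN)
        + Bbar * (kB * kN + kE * kN + kE * kD + kB * kD * α + kB * ε) + kN * ε)
    (h1 : a1 = m * Bbar * (kB * kN + kE * kN + kE * kD + kB * kD * α + kB * ε)
        + m * (kN * ε)
        + N ^ 2 * ηbar * Bbar * (kN + ε) * (1 + α * kD / kN + kE * kD / (ε * kB))
        + Bbar * (kE * kN * kD + kB * kN * ε + kB * kD * α * ε))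
    (h0 : a0 = m * Bbar * (kE * kN * kD + kN * kB * ε + kD * kB * α * ε)
        + N ^ 2 * ηbar * Bbar * (kE * kN * kD / kB + kN * ε + kD * α * ε)) :
    0 < a0 ∧ 0 < a1 ∧ 0 < a2 ∧ 0 < a3 ∧ 0 < a4 ∧
    a3 * a2 > a4 * a1 ∧
    a3 * a2 * a1 > a4 * a1 ^ 2 + a3 ^ 2 * a0 := by
  have hL₀ : 0 < Lbar := by rw [hL]; positivity
  have hL₁ : 0 < 1 - Lbar := by rw [hL, sub_pos, div_lt_one hkB]; exact hlt
  have hBbar : 0 < Bbar := by rw [hB]; positivity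
  have hηbar : 0 < ηbar := by rw [hη]; positivity
  have hm₀ : 0 < m := by rw [hm]; positivity
  subst h4
  exact isRouthHurwitzQuartic_of_linear_mul_cubic_add_quadratic (u := kN) (v := ε)
    (Q := N ^ 2 * ηbar * Bbar * (1 + α * kD / kN + kE * kD / (ε * kB)))
    (b2 := kB + kE) (b1 := kB * (kN + ε) + kE * (kN + kD) + kB * kD * α)
    (b0 := kB * kN * ε + kE * kN * kD + kB * kD * α * ε)
    hm₀ (by positivity) hBbar hkN hε (by positivity) (by positivity)
    (sub_nonneg.1 (by ring_nf; positivity))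
    (by rw [h3]; ring) (by rw [h2]; field_simp; ring) (by rw [h1]; ring)
    (by rw [h0]; field_simp; ring)

theorem stmt_9 (kB kD kE kN ε α M γ N : ℝ)
    (hkB : 0 < kB) (hkD : 0 < kD) (hkE : 0 < kE) (hkN : 0 < kN)
    (hε : 0 < ε) (hα : 0 < α) (hM : 0 < M) (hγ : 0 < γ)
    (hlt : kD < kB) (hN : 0 ≤ N)
    (Bbar Lbar ηbar m : ℝ)
    (hL : Lbar = kD / kB)
    (hB : Bbar = (1 - Lbar) / (1 + α * kD / kN + kE * kD / (ε * kB)))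
    (hη : ηbar = γ * Lbar / (1 - Lbar))
    (hm : m = M / (Lbar * (1 - Lbar)))
    (a0 a1 a2 a3 a4 : ℝ)
    (h4 : a4 = 1)
    (h3 : a3 = m + Bbar * (kB + kE) + kN + ε)
    (h2 : a2 = m * Bbar * (kB + kE) + m * (kN + ε)
        + N ^ 2 * ηbar * Bbar * (1 + kE * kD / (kB * ε) + α * kD / kN)
        + Bbar * (kB * kN + kE * kN + kE * kD + kB * kD * α + kB * ε) + kN * ε)
    (h1 : a1 = m * Bbar * (kB * kN + kE * kN + kE * kD + kB * kD * α + kB * ε)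
        + m * (kN * ε)
        + N ^ 2 * ηbar * Bbar * (kN + ε) * (1 + α * kD / kN + kE * kD / (ε * kB))
        + Bbar * (kE * kN * kD + kB * kN * ε + kB * kD * α * ε))
    (h0 : a0 = m * Bbar * (kE * kN * kD + kN * kB * ε + kD * kB * α * ε)
        + N ^ 2 * ηbar * Bbar * (kE * kN * kD / kB + kN * ε + kD * α * ε)) :
    0 < a0 ∧ 0 < a1 ∧ 0 < a2 ∧ 0 < a3 ∧ 0 < a4 ∧
    a3 * a2 > a4 * a1 ∧
    a3 * a2 * a1 > a4 * a1 ^ 2 + a3 ^ 2 * a0 :=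
  stmt_9_general kB kD kE kN ε α M γ N hkB hkD hkE hkN hε hα hM hγ hlt Bbar Lbar ηbar m hL hB hη hm
    a0 a1 a2 a3 a4 h4 h3 h2 h1 h0
end

section
/- Let L ∈ (0,1), v_S ∈ ℝ, γ > 0, and consider the 4×4 matrix A with rows (v_S, 0, 0, B), (0, v_S, 0, E), (0, 0, v_S, D), (η, η, η, ((3L−2)/L)·v_S), where η = γ·L/(1−L) − v_S²/L² and B, E, D ≥ 0 with B + E + D = 1 − L. If v_S = 0, then the eigenvalues of A are 0 (with multiplicity 2) and ±√(γ·L), hence A is diagonalizable over ℝ and the associated first-order system is hyperbolic at states with zero velocity. -/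
/-!
At rest the Jacobian is an "arrow" matrix `!![0,0,0,B; 0,0,0,E; 0,0,0,D; η,η,η,0]`, whose
characteristic polynomial is `λ⁴ - η (B+E+D) λ²`, and `η (B+E+D) = γL` when `B+E+D = 1-L`.
An explicit eigenbasis is given by the two vectors `(1,-1,0,0)`, `(0,1,-1,0)` of the kernel and
`(B, E, D, ±√(γL))`; its determinant `-2√(γL)(B+E+D)` is nonzero.
-/

open Polynomial Matrix

section CommRing

variable {R : Type*} [CommRing R]

def jacobianAtRest (B E D η : R) : Matrix (Fin 4) (Fin 4) R :=
  !![0, 0, 0, B; 0, 0, 0, E; 0, 0, 0, D; η, η, η, 0]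

def eigenbasisAtRest (B E D μ : R) : Matrix (Fin 4) (Fin 4) R :=
  !![1, 0, B, B; -1, 1, E, E; 0, -1, D, D; 0, 0, μ, -μ]

theorem charpoly_jacobianAtRest (B E D η : R) :
    (jacobianAtRest B E D η).charpoly = X ^ 4 - C (η * (B + E + D)) * X ^ 2 := by
  have hcm : (jacobianAtRest B E D η).charmatrix
      = !![X, 0, 0, -C B; 0, X, 0, -C E; 0, 0, X, -C D; -C η, -C η, -C η, X] := by
    ext i j
    fin_cases i <;> fin_cases j <;> simp [jacobianAtRest]
  rw [charpoly, hcm, det_succ_row_zero]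
  simp [Fin.sum_univ_succ, det_fin_three, Fin.succAbove]
  ring

theorem det_eigenbasisAtRest (B E D μ : R) :
    (eigenbasisAtRest B E D μ).det = -2 * μ * (B + E + D) := by
  rw [eigenbasisAtRest, det_succ_row_zero]
  simp [Fin.sum_univ_succ, det_fin_three, Fin.succAbove]
  ring

theorem jacobianAtRest_mul_eigenbasisAtRest {B E D η μ : R} (h : η * (B + E + D) = μ * μ) :
    jacobianAtRest B E D η * eigenbasisAtRest B E D μ =
      eigenbasisAtRest B E D μ * diagonal ![0, 0, μ, -μ] := by
  ext i j
  fin_cases i <;> fin_cases j <;>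
    simp [jacobianAtRest, eigenbasisAtRest, mul_apply, Fin.sum_univ_four] <;>
    linear_combination h

end CommRing

theorem roots_X_pow_four_sub_C_mul_X_sq {R : Type*} [CommRing R] [IsDomain R] (μ : R) :
    (X ^ 4 - C (μ * μ) * X ^ 2 : R[X]).roots = {0, 0, μ, -μ} := by
  have : (X ^ 4 - C (μ * μ) * X ^ 2 : R[X]) =
      (({0, 0, μ, -μ} : Multiset R).map fun a => X - C a).prod := by
    simp only [Multiset.insert_eq_cons, Multiset.map_cons, Multiset.prod_cons,
      Multiset.map_singleton, Multiset.prod_singleton, map_neg, map_zero, map_mul]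
    ring
  rw [this, roots_multiset_prod_X_sub_C]

section Field

variable {K : Type*} [Field K] [NeZero (2 : K)] {B E D η μ : K}

theorem isUnit_det_eigenbasisAtRest (hμ : μ ≠ 0) (hs : B + E + D ≠ 0) :
    IsUnit (eigenbasisAtRest B E D μ).det := by
  rw [det_eigenbasisAtRest, isUnit_iff_ne_zero]
  exact mul_ne_zero (mul_ne_zero (neg_ne_zero.mpr two_ne_zero) hμ) hs

theorem jacobianAtRest_eq_conj (h : η * (B + E + D) = μ * μ) (hμ : μ ≠ 0) (hs : B + E + D ≠ 0) :
    jacobianAtRest B E D η =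
      eigenbasisAtRest B E D μ * diagonal ![0, 0, μ, -μ] * (eigenbasisAtRest B E D μ)⁻¹ := by
  rw [← jacobianAtRest_mul_eigenbasisAtRest h,
    mul_nonsing_inv_cancel_right _ _ (isUnit_det_eigenbasisAtRest hμ hs)]

end Field

theorem stmt_18_general (L vS γ B E D : ℝ)
    (hL : L ∈ Set.Ioo (0 : ℝ) 1) (hγ : 0 < γ)
    (hsum : B + E + D = 1 - L)
    (η : ℝ) (hη : η = γ * L / (1 - L) - vS ^ 2 / L ^ 2)
    (A : Matrix (Fin 4) (Fin 4) ℝ)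
    (hA : A = !![vS, 0, 0, B;
                 0, vS, 0, E;
                 0, 0, vS, D;
                 η, η, η, ((3 * L - 2) / L) * vS])
    (hv : vS = 0) :
    A.charpoly.roots = {0, 0, Real.sqrt (γ * L), -Real.sqrt (γ * L)} ∧
    ∃ P Dg : Matrix (Fin 4) (Fin 4) ℝ, IsUnit P.det ∧ Dg.IsDiag ∧ A = P * Dg * P⁻¹ := by
  obtain ⟨hL0, hL1⟩ := hL
  subst hv
  have hA_rest : A = jacobianAtRest B E D η := by simpa [jacobianAtRest] using hA
  set μ := Real.sqrt (γ * L)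
  have hμμ : μ * μ = γ * L := Real.mul_self_sqrt (by positivity)
  have hμ : μ ≠ 0 := (Real.sqrt_pos.mpr (by positivity)).ne'
  have hs : B + E + D ≠ 0 := by rw [hsum]; exact (sub_pos.mpr hL1).ne'
  have hηs : η * (B + E + D) = μ * μ := by
    rw [hμμ, hsum, hη]
    field_simp [sub_ne_zero.mpr hL1.ne']
    ring
  subst hA_rest
  refine ⟨?_, _, _, isUnit_det_eigenbasisAtRest hμ hs, isDiag_diagonal _,
    jacobianAtRest_eq_conj hηs hμ hs⟩
  rw [charpoly_jacobianAtRest, hηs, roots_X_pow_four_sub_C_mul_X_sq]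

theorem stmt_18 (L vS γ B E D : ℝ)
    (hL : L ∈ Set.Ioo (0 : ℝ) 1) (hγ : 0 < γ)
    (hB : 0 ≤ B) (hE : 0 ≤ E) (hD : 0 ≤ D)
    (hsum : B + E + D = 1 - L)
    (η : ℝ) (hη : η = γ * L / (1 - L) - vS ^ 2 / L ^ 2)
    (A : Matrix (Fin 4) (Fin 4) ℝ)
    (hA : A = !![vS, 0, 0, B;
                 0, vS, 0, E;
                 0, 0, vS, D;
                 η, η, η, ((3 * L - 2) / L) * vS])
    (hv : vS = 0) :
    A.charpoly.roots = {0, 0, Real.sqrt (γ * L), -Real.sqrt (γ * L)} ∧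
    ∃ P Dg : Matrix (Fin 4) (Fin 4) ℝ, IsUnit P.det ∧ Dg.IsDiag ∧ A = P * Dg * P⁻¹ :=
  stmt_18_general L vS γ B E D hL hγ hsum η hη A hA hv
end
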